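/- Let T be the triple intersection form of M_3^{(dP_8)^3}. Set Γ_B = D_6, Γ_1 = D_7, Γ_2 = D_8, Γ_3 = D_9, and Γ_0 = 3(3D_5 + D_6 + 3D_7 + 3D_8) = 9D_5 + 3D_6 + 9D_7 + 9D_8. Then T is diagonal in the basis Γ_0, Γ_B, Γ_1, Γ_2, Γ_3: T(Γ_0,Γ_0,Γ_0) = 243, T(Γ_B,Γ_B,Γ_B) = 9, T(Γ_i,Γ_i,Γ_i) = 1 for i = 1, 2, 3, and T(X,Y,Z) = 0 whenever X, Y, Z ∈ {Γ_0, Γ_B, Γ_1, Γ_2, Γ_3} are not all equal. -/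

import Mathlib

/-!
By trilinearity `T` is determined by the table `c`: in `D`-coordinates `T(x, y, z)` is an explicit
trilinear polynomial, and all `5³` values on triples of `Γ`'s are direct evaluations of it.
-/

namespace Stmt17

/-- The real vector space with basis `D₅, D₆, D₇, D₈, D₉` (indexed `0, 1, 2, 3, 4`). -/
abbrev V := Fin 5 → ℝ

/-- The basis vector `D_{i+5}` (`i : Fin 5` zero-based: `D 0 = D₅, …, D 4 = D₉`). -/
def D (i : Fin 5) : V := Pi.single i 1

/-- The triple intersection numbers of `M₃^{(dP₈)³}` on basis triples, symmetric in
the three indices: the only nonzero values, up to permutation, are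
`D₅³ = −2, D₆³ = 9, D₇³ = 1, D₈³ = 1, D₉³ = 1, D₅²D₆ = 1, D₅D₆² = −3, D₅²D₇ = 1,
D₅D₇² = −1, D₅²D₈ = 1, D₅D₈² = −1`. -/
def c (i j k : Fin 5) : ℝ :=
  if ({i, j, k} : Multiset (Fin 5)) = {0, 0, 0} then -2
  else if ({i, j, k} : Multiset (Fin 5)) = {1, 1, 1} then 9
  else if ({i, j, k} : Multiset (Fin 5)) = {2, 2, 2} then 1
  else if ({i, j, k} : Multiset (Fin 5)) = {3, 3, 3} then 1
  else if ({i, j, k} : Multiset (Fin 5)) = {4, 4, 4} then 1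
  else if ({i, j, k} : Multiset (Fin 5)) = {0, 0, 1} then 1
  else if ({i, j, k} : Multiset (Fin 5)) = {0, 1, 1} then -3
  else if ({i, j, k} : Multiset (Fin 5)) = {0, 0, 2} then 1
  else if ({i, j, k} : Multiset (Fin 5)) = {0, 2, 2} then -1
  else if ({i, j, k} : Multiset (Fin 5)) = {0, 0, 3} then 1
  else if ({i, j, k} : Multiset (Fin 5)) = {0, 3, 3} then -1
  else 0

/-- `Γ_B = D₆`. -/
def ΓB : V := D 1
/-- `Γ₁ = D₇`. -/
def Γ1 : V := D 2
/-- `Γ₂ = D₈`. -/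
def Γ2 : V := D 3
/-- `Γ₃ = D₉`. -/
def Γ3 : V := D 4
/-- `Γ₀ = 3(3D₅ + D₆ + 3D₇ + 3D₈) = 9D₅ + 3D₆ + 9D₇ + 9D₈`. -/
def Γ0 : V := (9 : ℝ) • D 0 + (3 : ℝ) • D 1 + (9 : ℝ) • D 2 + (9 : ℝ) • D 3

end Stmt17

theorem Fintype.sum_fin_three_arrow {κ M : Type*} [Fintype κ] [AddCommMonoid M]
    (f : (Fin 3 → κ) → M) : ∑ r, f r = ∑ i, ∑ j, ∑ k, f ![i, j, k] := by
  simp only [← (Fin.consEquiv fun _ => κ).sum_comp, Fintype.sum_prod_type, Fintype.sum_unique]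
  rfl

namespace MultilinearMap

variable {ι κ R M : Type*} [CommSemiring R] [AddCommMonoid M] [Module R M]
  [Fintype κ] [DecidableEq κ]

theorem apply_eq_sum_piSingle [Fintype ι] [DecidableEq ι]
    (f : MultilinearMap R (fun _ : ι => κ → R) M) (v : ι → κ → R) :
    f v = ∑ r : ι → κ, (∏ i, v i (r i)) • f fun i => Pi.single (r i) 1 := by
  conv_lhs => rw [show v = fun i => ∑ j, v i j • Pi.single j 1 from
    funext fun i => pi_eq_sum_univ' (v i)]
  simp_rw [f.map_sum, f.map_smul_univ]

theorem apply_three_eq_sum_piSingle (f : MultilinearMap R (fun _ : Fin 3 => κ → R) M)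
    (x y z : κ → R) :
    f ![x, y, z] = ∑ i, ∑ j, ∑ k,
      (x i * y j * z k) • f ![Pi.single i 1, Pi.single j 1, Pi.single k 1] := by
  rw [apply_eq_sum_piSingle, Fintype.sum_fin_three_arrow]
  refine Fintype.sum_congr _ _ fun i => Fintype.sum_congr _ _ fun j =>
    Fintype.sum_congr _ _ fun k => ?_
  rw [Fin.prod_univ_three]
  congr 2
  ext a
  fin_cases a <;> rfl

end MultilinearMap

namespace Stmt17

def tripleIntersection (x y z : V) : ℝ :=
  -2 * (x 0 * y 0 * z 0) + 9 * (x 1 * y 1 * z 1) + x 2 * y 2 * z 2 + x 3 * y 3 * z 3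
    + x 4 * y 4 * z 4
    + (x 0 * y 0 * z 1 + x 0 * y 1 * z 0 + x 1 * y 0 * z 0)
    - 3 * (x 0 * y 1 * z 1 + x 1 * y 0 * z 1 + x 1 * y 1 * z 0)
    + (x 0 * y 0 * z 2 + x 0 * y 2 * z 0 + x 2 * y 0 * z 0)
    - (x 0 * y 2 * z 2 + x 2 * y 0 * z 2 + x 2 * y 2 * z 0)
    + (x 0 * y 0 * z 3 + x 0 * y 3 * z 0 + x 3 * y 0 * z 0)
    - (x 0 * y 3 * z 3 + x 3 * y 0 * z 3 + x 3 * y 3 * z 0)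

theorem sum_mul_c_eq_tripleIntersection (x y z : V) :
    ∑ i, ∑ j, ∑ k, x i * y j * z k * c i j k = tripleIntersection x y z := by
  simp only [Fin.sum_univ_five]
  simp +decide only [c, if_true, if_false]
  rw [tripleIntersection]
  ring

theorem apply_eq_tripleIntersection (T : MultilinearMap ℝ (fun _ : Fin 3 => V) ℝ)
    (hvals : ∀ i j k : Fin 5, T ![D i, D j, D k] = c i j k) (x y z : V) :
    T ![x, y, z] = tripleIntersection x y z := by
  rw [T.apply_three_eq_sum_piSingle, ← sum_mul_c_eq_tripleIntersection]
  simp only [smul_eq_mul, ← hvals]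
  rfl

def Γ : Fin 5 → V := ![Γ0, ΓB, Γ1, Γ2, Γ3]

theorem Γ_eq : Γ = ![![9, 3, 9, 9, 0], ![0, 1, 0, 0, 0], ![0, 0, 1, 0, 0], ![0, 0, 0, 1, 0],
    ![0, 0, 0, 0, 1]] := by
  ext a i
  fin_cases a <;> fin_cases i <;> simp [Γ, Γ0, ΓB, Γ1, Γ2, Γ3, D]

theorem range_Γ : Set.range Γ = {Γ0, ΓB, Γ1, Γ2, Γ3} := by
  simp only [Γ, Matrix.range_cons, Matrix.range_empty, Set.union_empty, Set.singleton_union]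

theorem tripleIntersection_Γ (a b k : Fin 5) :
    tripleIntersection (Γ a) (Γ b) (Γ k) =
      if a = b ∧ b = k then ![243, 9, 1, 1, 1] a else 0 := by
  rw [Γ_eq]
  fin_cases a <;> fin_cases b <;> fin_cases k <;> simp [tripleIntersection] <;> norm_num

theorem statement17_general (T : MultilinearMap ℝ (fun _ : Fin 3 => V) ℝ)
    (hvals : ∀ i j k : Fin 5, T ![D i, D j, D k] = c i j k) :
    T ![Γ0, Γ0, Γ0] = 243 ∧
    T ![ΓB, ΓB, ΓB] = 9 ∧
    T ![Γ1, Γ1, Γ1] = 1 ∧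
    T ![Γ2, Γ2, Γ2] = 1 ∧
    T ![Γ3, Γ3, Γ3] = 1 ∧
    (∀ X Y Z : V, X ∈ ({Γ0, ΓB, Γ1, Γ2, Γ3} : Set V) →
      Y ∈ ({Γ0, ΓB, Γ1, Γ2, Γ3} : Set V) → Z ∈ ({Γ0, ΓB, Γ1, Γ2, Γ3} : Set V) →
      ¬(X = Y ∧ Y = Z) → T ![X, Y, Z] = 0) := by
  have hΓ (a b k : Fin 5) : T ![Γ a, Γ b, Γ k] =
      if a = b ∧ b = k then ![243, 9, 1, 1, 1] a else 0 := by
    rw [apply_eq_tripleIntersection T hvals, tripleIntersection_Γ]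
  refine ⟨by simpa [Γ] using hΓ 0 0 0, by simpa [Γ] using hΓ 1 1 1, by simpa [Γ] using hΓ 2 2 2,
    by simpa [Γ] using hΓ 3 3 3, by simpa [Γ] using hΓ 4 4 4, ?_⟩
  simp only [← range_Γ]
  rintro _ _ _ ⟨a, rfl⟩ ⟨b, rfl⟩ ⟨k, rfl⟩ hne
  rw [hΓ, if_neg]
  rintro ⟨rfl, rfl⟩
  exact hne ⟨rfl, rfl⟩

/-- The triple intersection form of `M₃^{(dP₈)³}` is diagonal in the basis
`Γ₀, Γ_B, Γ₁, Γ₂, Γ₃`: `T(Γ₀,Γ₀,Γ₀) = 243`, `T(Γ_B,Γ_B,Γ_B) = 9`,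
`T(Γᵢ,Γᵢ,Γᵢ) = 1` for `i = 1, 2, 3`, and `T(X,Y,Z) = 0` whenever
`X, Y, Z ∈ {Γ₀, Γ_B, Γ₁, Γ₂, Γ₃}` are not all equal. -/
theorem statement17 (T : MultilinearMap ℝ (fun _ : Fin 3 => V) ℝ)
    (hsymm : ∀ x y z : V, T ![x, y, z] = T ![y, x, z] ∧ T ![x, y, z] = T ![x, z, y])
    (hvals : ∀ i j k : Fin 5, T ![D i, D j, D k] = c i j k) :
    T ![Γ0, Γ0, Γ0] = 243 ∧
    T ![ΓB, ΓB, ΓB] = 9 ∧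
    T ![Γ1, Γ1, Γ1] = 1 ∧
    T ![Γ2, Γ2, Γ2] = 1 ∧
    T ![Γ3, Γ3, Γ3] = 1 ∧
    (∀ X Y Z : V, X ∈ ({Γ0, ΓB, Γ1, Γ2, Γ3} : Set V) →
      Y ∈ ({Γ0, ΓB, Γ1, Γ2, Γ3} : Set V) → Z ∈ ({Γ0, ΓB, Γ1, Γ2, Γ3} : Set V) →
      ¬(X = Y ∧ Y = Z) → T ![X, Y, Z] = 0) :=
  statement17_general T hvals

end Stmt17
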